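/- Let κ be an infinite cardinal. If there exists a real Banach space X of density character at most κ such that every real Banach space of density character at most κ admits an isomorphic embedding into X, then there exists a totally disconnected compact Hausdorff space K of weight at most κ such that every real Banach space of density character at most κ admits an isomorphic embedding into C(K, ℝ). -/

import Mathlib

open Cardinal

/-- The weight of a topological space: the smallest cardinality of a base for its topology. -/
noncomputable def topWeight (X : Type u) [TopologicalSpace X] : Cardinal.{u} :=
  sInf { c | ∃ B : Set (Set X), TopologicalSpace.IsTopologicalBasis B ∧ #B = c }

/-- The density character of a topological space: the smallest cardinality of a dense subset. -/
noncomputable def densityChar (X : Type u) [TopologicalSpace X] : Cardinal.{u} :=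
  sInf { c | ∃ s : Set X, Dense s ∧ #s = c }

/-- An isomorphic embedding of Banach spaces: a bounded linear map which is bounded below. -/
def IsIsoEmbedding {Y Z : Type*} [NormedAddCommGroup Y] [NormedSpace ℝ Y]
    [NormedAddCommGroup Z] [NormedSpace ℝ Z] (T : Y →L[ℝ] Z) : Prop :=
  ∃ c : ℝ, 0 < c ∧ ∀ y : Y, c * ‖y‖ ≤ ‖T y‖

/-!
Take a dense set `D ⊆ X` with `|D| = dens X`. A functional of norm at most `1` is determined by
its values on `D`, and the value at `d` lies in `[-‖d‖, ‖d‖]`, so it can be coded by a point of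
the Cantor space through a continuous surjection `q : 2^ℕ → [-1, 1]`. Being the restriction of such
a functional is a closed condition on families indexed by `D`, so the codes form a closed subset
`K` of `(2^ℕ)^D`: a totally disconnected compact space of weight at most `|D| + ℵ₀`. Evaluation
`x ↦ (l ↦ f_l x)` embeds `X` isometrically into `C(K, ℝ)`, and it remains to compose with the
embeddings into `X`.
-/

open TopologicalSpace

lemma topWeight_le_mk {X : Type u} [TopologicalSpace X] {B : Set (Set X)}
    (hB : IsTopologicalBasis B) : topWeight X ≤ #B :=
  csInf_le' ⟨B, hB, rfl⟩

lemma mk_finset_le_max (α : Type u) : #(Finset α) ≤ max ℵ₀ #α := by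
  classical
  exact (mk_le_of_surjective List.toFinset_surjective).trans (mk_list_le_max α)

lemma topWeight_subtype_pi_le {ι : Type u} {Y : Type v} [TopologicalSpace Y]
    [SecondCountableTopology Y] (s : Set (ι → Y)) :
    topWeight s ≤ max (lift.{v} #ι) ℵ₀ := by
  classical
  obtain ⟨B₀, hB₀c, -, hB₀⟩ := exists_countable_basis Y
  have : Countable B₀ := hB₀c.to_subtype
  set B : Set (Set (ι → Y)) := { S | ∃ (U : ι → Set Y) (F : Finset ι),
    (∀ i ∈ F, U i ∈ B₀) ∧ S = (F : Set ι).pi U }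
  have hB : IsTopologicalBasis B := isTopologicalBasis_pi fun _ ↦ hB₀
  let code : (Σ F : Finset ι, F → B₀) → Set (ι → Y) :=
    fun p ↦ (p.1 : Set ι).pi fun i ↦ if h : i ∈ p.1 then p.2 ⟨i, h⟩ else ∅
  have hcode : B ⊆ Set.range code := by
    rintro S ⟨U, F, hU, rfl⟩
    refine ⟨⟨F, fun i ↦ ⟨U i, hU i i.2⟩⟩, Set.pi_congr rfl fun i hi ↦ ?_⟩
    simp [Finset.mem_coe.mp hi]
  calc topWeight s ≤ #(Set.preimage ((↑) : s → ι → Y) '' B) :=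
        topWeight_le_mk (hB.isInducing .subtypeVal)
    _ ≤ #B := mk_image_le
    _ ≤ #(Σ F : Finset ι, F → B₀) := (mk_le_mk_of_subset hcode).trans mk_range_le
    _ ≤ sum fun _ : Finset ι ↦ (ℵ₀ : Cardinal.{max u v}) := by
        rw [mk_sigma]; exact sum_le_sum _ _ fun F ↦ mk_le_aleph0 (α := F → B₀)
    _ = lift.{v} #(Finset ι) * ℵ₀ := by rw [sum_const, lift_aleph0, lift_umax.{u, v}]
    _ ≤ max (lift.{v} #ι) ℵ₀ := by
        rw [← mul_aleph0_eq (le_max_right (lift.{v} #ι) ℵ₀)]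
        gcongr
        simpa [max_comm] using lift_le.{v}.mpr (mk_finset_le_max ι)

lemma Equicontinuous.continuous_apply_of_dense {K Y α : Type*} [TopologicalSpace K]
    [TopologicalSpace Y] [UniformSpace α] {F : K → Y → α} (hF : Equicontinuous F) {D : Set Y}
    (hD : Dense D) (hcont : ∀ y ∈ D, Continuous fun k ↦ F k y) (y : Y) :
    Continuous fun k ↦ F k y :=
  hD.induction hcont
    ((UniformFun.isClosed_setOfPred_continuous K).preimage (equicontinuous_iff_continuous.mp hF)) y

section DualBall

variable {X : Type*} [NormedAddCommGroup X] [NormedSpace ℝ X]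

lemma exists_strongDual_of_abs_le {E : X → ℝ}
    (hE : ∀ (a b : ℝ) (y z w : X), |a * E y + b * E z - E w| ≤ ‖a • y + b • z - w‖) :
    ∃ f : StrongDual ℝ X, ‖f‖ ≤ 1 ∧ ⇑f = E := by
  have hlin : ∀ (a b : ℝ) (y z : X), E (a • y + b • z) = a * E y + b * E z := fun a b y z ↦ by
    have := hE a b y z (a • y + b • z)
    rw [sub_self, norm_zero, abs_nonpos_iff, sub_eq_zero] at this
    exact this.symm
  have hmap_add : ∀ y z, E (y + z) = E y + E z := fun y z ↦ by
    simpa using hlin 1 1 y z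
  have hmap_smul : ∀ (a : ℝ) y, E (a • y) = a * E y := fun a y ↦ by
    simpa using hlin a 0 y y
  have hmap_zero : E 0 = 0 := by simpa using hmap_smul 0 0
  have hbound : ∀ y, ‖E y‖ ≤ 1 * ‖y‖ := fun y ↦ by
    simpa [hmap_zero] using hE 1 0 y y 0
  let e : X →ₗ[ℝ] ℝ := { toFun := E, map_add' := hmap_add, map_smul' := hmap_smul }
  exact ⟨e.mkContinuous 1 hbound, LinearMap.mkContinuous_norm_le _ zero_le_one _, rfl⟩

variable {D : Set X}

/-- The condition cutting out, among functions on `D`, the restrictions of functionals of norm at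
most `1`; unlike that description, it is visibly closed under pointwise limits. -/
def LinearContractiveOn (D : Set X) (g : D → ℝ) : Prop :=
  ∀ (a b : ℝ) (c d e : D), |a * g c + b * g d - g e| ≤ ‖a • (c : X) + b • (d : X) - e‖

lemma LinearContractiveOn.exists_strongDual (hD : Dense D) {g : D → ℝ}
    (hg : LinearContractiveOn D g) : ∃ f : StrongDual ℝ X, ‖f‖ ≤ 1 ∧ ∀ i : D, f i = g i := by
  set G : X → ℝ := Function.extend (↑) g 0
  have hG : ∀ i : D, G i = g i := Subtype.val_injective.extend_apply g 0
  have hlip : LipschitzOnWith 1 G D := LipschitzOnWith.of_dist_le_mul fun c hc e he ↦ by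
    simpa [hG ⟨c, hc⟩, hG ⟨e, he⟩, Real.dist_eq, dist_eq_norm] using
      hg 1 0 ⟨c, hc⟩ ⟨c, hc⟩ ⟨e, he⟩
  obtain ⟨E, hElip, hEG⟩ := hlip.extend_real
  have hE : ∀ (a b : ℝ) (y z w : X), |a * E y + b * E z - E w| ≤ ‖a • y + b • z - w‖ := by
    intro a b y z w
    have hEc := hElip.continuous
    have hclosed : IsClosed {p : X × X × X |
        |a * E p.1 + b * E p.2.1 - E p.2.2| ≤ ‖a • p.1 + b • p.2.1 - p.2.2‖} :=
      isClosed_le (by fun_prop) (by fun_prop)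
    refine (hD.prod (hD.prod hD)).induction (P := fun p ↦ _) ?_ hclosed (y, z, w)
    rintro ⟨c, d, e⟩ ⟨hc, hd, he⟩
    have := hg a b ⟨c, hc⟩ ⟨d, hd⟩ ⟨e, he⟩
    rw [← hG, ← hG, ← hG] at this
    rwa [← hEG hc, ← hEG hd, ← hEG he]
  obtain ⟨f, hf, rfl⟩ := exists_strongDual_of_abs_le hE
  exact ⟨f, hf, fun i ↦ (hEG i.2).symm.trans (hG i)⟩

lemma linearContractiveOn_strongDual {f : StrongDual ℝ X} (hf : ‖f‖ ≤ 1) :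
    LinearContractiveOn D fun i ↦ f i := fun a b c d e ↦ by
  have := (f.le_opNorm (a • (c : X) + b • (d : X) - e)).trans
    (mul_le_of_le_one_left (norm_nonneg _) hf)
  simpa using this

def restrictedDualBall (D : Set X) : Set (D → ℝ) :=
  {g | ∃ f : StrongDual ℝ X, ‖f‖ ≤ 1 ∧ ∀ i : D, f i = g i}

lemma isClosed_restrictedDualBall (hD : Dense D) : IsClosed (restrictedDualBall D) := by
  have : restrictedDualBall D = {g | LinearContractiveOn D g} := by
    ext g
    constructor
    · rintro ⟨f, hf, hfg⟩
      rw [Set.mem_ofPred_eq, ← funext hfg]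
      exact linearContractiveOn_strongDual hf
    · exact LinearContractiveOn.exists_strongDual hD
  rw [this]
  simp only [LinearContractiveOn, Set.ofPred_forall]
  exact isClosed_iInter fun a ↦ isClosed_iInter fun b ↦ isClosed_iInter fun c ↦
    isClosed_iInter fun d ↦ isClosed_iInter fun e ↦ isClosed_le (by fun_prop) (by fun_prop)

end DualBall

section CodedDualBall

variable {X C : Type*} [NormedAddCommGroup X] [NormedSpace ℝ X] {q : C → ℝ} {D : Set X}

/-- For `C` the Cantor space and `q` onto `[-1, 1]`, this is a totally disconnected compact space
mapping onto the dual ball through `codedFunctional`. -/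
def codedDualBall (q : C → ℝ) (D : Set X) : Set (D → C) :=
  {l | (fun i : D ↦ ‖(i : X)‖ * q (l i)) ∈ restrictedDualBall D}

noncomputable def codedFunctional (l : codedDualBall q D) : StrongDual ℝ X :=
  l.2.choose

lemma norm_codedFunctional_le (l : codedDualBall q D) : ‖codedFunctional l‖ ≤ 1 :=
  l.2.choose_spec.1

lemma codedFunctional_apply_coe (l : codedDualBall q D) (i : D) :
    codedFunctional l i = ‖(i : X)‖ * q (l.1 i) :=
  l.2.choose_spec.2 i

lemma exists_codedFunctional_eq (hq : Set.Icc (-1) 1 ⊆ Set.range q) (hD : Dense D)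
    {f : StrongDual ℝ X} (hf : ‖f‖ ≤ 1) : ∃ l : codedDualBall q D, codedFunctional l = f := by
  have hcode : ∀ i : D, ∃ c, q c * ‖(i : X)‖ = f i := fun i ↦ by
    have hfi : |f i| ≤ ‖(i : X)‖ :=
      (f.le_opNorm i).trans (mul_le_of_le_one_left (norm_nonneg _) hf)
    have hratio : f i / ‖(i : X)‖ ∈ Set.Icc (-1) 1 := abs_le.mp <| by
      rw [abs_div, abs_norm]
      exact div_le_one_of_le₀ hfi (norm_nonneg _)
    obtain ⟨c, hc⟩ := hq hratio
    -- for `‖i‖ = 0` the ratio is the junk value `0`, which is right since then `f i = 0`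
    refine ⟨c, hc ▸ div_mul_cancel_of_imp fun h ↦ ?_⟩
    rw [norm_eq_zero.mp h, map_zero]
  choose l hl using hcode
  have hmem : l ∈ codedDualBall q D := ⟨f, hf, fun i ↦ by rw [← hl, mul_comm]⟩
  refine ⟨⟨l, hmem⟩, DFunLike.coe_injective <|
    Continuous.ext_on hD (ContinuousLinearMap.continuous _) f.continuous fun x hx ↦ ?_⟩
  exact (codedFunctional_apply_coe ⟨l, hmem⟩ ⟨x, hx⟩).trans
    ((mul_comm _ _).trans (hl ⟨x, hx⟩))

variable [TopologicalSpace C]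

lemma isClosed_codedDualBall (hq : Continuous q) (hD : Dense D) :
    IsClosed (codedDualBall q D) :=
  (isClosed_restrictedDualBall hD).preimage (by fun_prop)

lemma continuous_codedFunctional_apply (hq : Continuous q) (hD : Dense D) (x : X) :
    Continuous fun l : codedDualBall q D ↦ codedFunctional l x := by
  have hequi : Equicontinuous fun (l : codedDualBall q D) (y : X) ↦ codedFunctional l y :=
    (LipschitzWith.uniformEquicontinuous _ 1 fun l ↦
        (codedFunctional l).lipschitz.weaken (by exact_mod_cast norm_codedFunctional_le l)
      ).equicontinuous
  refine hequi.continuous_apply_of_dense hD (fun d hd ↦ ?_) x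
  simp only [fun l : codedDualBall q D ↦ codedFunctional_apply_coe l ⟨d, hd⟩]
  exact continuous_const.mul (hq.comp ((continuous_apply _).comp continuous_subtype_val))

end CodedDualBall

lemma exists_linearIsometry_continuousMap {X K : Type*} [NormedAddCommGroup X] [NormedSpace ℝ X]
    [TopologicalSpace K] [CompactSpace K] (Φ : K → StrongDual ℝ X) (hΦ : ∀ k, ‖Φ k‖ ≤ 1)
    (hcont : ∀ x, Continuous fun k ↦ Φ k x) (hnorming : ∀ x, ∃ k, Φ k x = ‖x‖) :
    Nonempty (X →ₗᵢ[ℝ] C(K, ℝ)) := by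
  let T : X →ₗ[ℝ] C(K, ℝ) :=
    { toFun := fun x ↦ ⟨fun k ↦ Φ k x, hcont x⟩
      map_add' := fun x y ↦ ContinuousMap.ext fun k ↦ map_add (Φ k) x y
      map_smul' := fun a x ↦ ContinuousMap.ext fun k ↦ map_smul (Φ k) a x }
  refine ⟨⟨T, fun x ↦ le_antisymm ?_ ?_⟩⟩
  · refine (ContinuousMap.norm_le _ (norm_nonneg x)).mpr fun k ↦ ?_
    exact ((Φ k).le_opNorm x).trans (mul_le_of_le_one_left (norm_nonneg x) (hΦ k))
  · obtain ⟨k, hk⟩ := hnorming x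
    calc ‖x‖ = ‖T x k‖ := by simp [T, hk]
      _ ≤ ‖T x‖ := (T x).norm_coe_le_norm k

theorem exists_totallyDisconnected_linearIsometry (X : Type u) [NormedAddCommGroup X]
    [NormedSpace ℝ X] {D : Set X} (hD : Dense D) :
    ∃ K : CompHaus.{u}, TotallyDisconnectedSpace K ∧ topWeight K ≤ max #D ℵ₀ ∧
      Nonempty (X →ₗᵢ[ℝ] C(K, ℝ)) := by
  have : Nonempty (Set.Icc (-1 : ℝ) 1) := ⟨⟨0, by norm_num⟩⟩
  obtain ⟨q, hq, hq_surj⟩ :=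
    exists_nat_bool_continuous_surjective_of_compact (Set.Icc (-1 : ℝ) 1)
  have hq_range : Set.Icc (-1) 1 ⊆ Set.range fun c ↦ (q c : ℝ) := fun r hr ↦
    let ⟨c, hc⟩ := hq_surj ⟨r, hr⟩; ⟨c, congrArg Subtype.val hc⟩
  set K := codedDualBall (fun c ↦ (q c : ℝ)) D
  have : CompactSpace K := isCompact_iff_compactSpace.mp
    (isClosed_codedDualBall (by fun_prop) hD).isCompact
  refine ⟨CompHaus.of K, inferInstanceAs (TotallyDisconnectedSpace K), ?_, ?_⟩
  · simpa using topWeight_subtype_pi_le K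
  · refine exists_linearIsometry_continuousMap codedFunctional norm_codedFunctional_le
      (continuous_codedFunctional_apply (by fun_prop) hD) fun x ↦ ?_
    obtain ⟨f, hf, hfx⟩ := exists_dual_vector'' ℝ x
    obtain ⟨l, rfl⟩ := exists_codedFunctional_eq hq_range hD hf
    exact ⟨l, hfx⟩

lemma exists_dense_mk_eq_densityChar (X : Type u) [TopologicalSpace X] :
    ∃ s : Set X, Dense s ∧ #s = densityChar X :=
  csInf_mem (s := {c | ∃ s : Set X, Dense s ∧ #s = c}) ⟨_, Set.univ, dense_univ, rfl⟩

lemma LinearIsometry.isIsoEmbedding_comp {Y Z W : Type*} [NormedAddCommGroup Y] [NormedSpace ℝ Y]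
    [NormedAddCommGroup Z] [NormedSpace ℝ Z] [NormedAddCommGroup W] [NormedSpace ℝ W]
    (T : Z →ₗᵢ[ℝ] W) {S : Y →L[ℝ] Z} (hS : IsIsoEmbedding S) :
    IsIsoEmbedding (T.toContinuousLinearMap.comp S) := by
  obtain ⟨c, hc, hcS⟩ := hS
  exact ⟨c, hc, fun y ↦ (hcS y).trans_eq (T.norm_map (S y)).symm⟩

theorem stmt2_general (κ : Cardinal.{u}) (hκ : ℵ₀ ≤ κ)
    (X : Type u) [NormedAddCommGroup X] [NormedSpace ℝ X]
    (hX : densityChar X ≤ κ)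
    (huniv : ∀ (Y : Type u) [NormedAddCommGroup Y] [NormedSpace ℝ Y] [CompleteSpace Y],
      densityChar Y ≤ κ → ∃ T : Y →L[ℝ] X, IsIsoEmbedding T) :
    ∃ K : CompHaus.{u}, TotallyDisconnectedSpace K ∧ topWeight K ≤ κ ∧
      ∀ (Y : Type u) [NormedAddCommGroup Y] [NormedSpace ℝ Y] [CompleteSpace Y],
        densityChar Y ≤ κ → ∃ T : Y →L[ℝ] C(K, ℝ), IsIsoEmbedding T := by
  obtain ⟨D, hD, hDcard⟩ := exists_dense_mk_eq_densityChar X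
  obtain ⟨K, hK, hKweight, ⟨T⟩⟩ := exists_totallyDisconnected_linearIsometry X hD
  refine ⟨K, hK, hKweight.trans (max_le (hDcard ▸ hX) hκ), fun Y _ _ _ hY ↦ ?_⟩
  obtain ⟨S, hS⟩ := huniv Y hY
  exact ⟨_, T.isIsoEmbedding_comp hS⟩

/-- If there is a real Banach space `X` of density character at most `κ` into which every real
Banach space of density character at most `κ` isomorphically embeds, then there is a totally
disconnected compact Hausdorff space `K` of weight at most `κ` such that every real Banach space
of density character at most `κ` isomorphically embeds into `C(K, ℝ)`. -/
theorem stmt2 (κ : Cardinal.{u}) (hκ : ℵ₀ ≤ κ)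
    (X : Type u) [NormedAddCommGroup X] [NormedSpace ℝ X] [CompleteSpace X]
    (hX : densityChar X ≤ κ)
    (huniv : ∀ (Y : Type u) [NormedAddCommGroup Y] [NormedSpace ℝ Y] [CompleteSpace Y],
      densityChar Y ≤ κ → ∃ T : Y →L[ℝ] X, IsIsoEmbedding T) :
    ∃ K : CompHaus.{u}, TotallyDisconnectedSpace K ∧ topWeight K ≤ κ ∧
      ∀ (Y : Type u) [NormedAddCommGroup Y] [NormedSpace ℝ Y] [CompleteSpace Y],
        densityChar Y ≤ κ → ∃ T : Y →L[ℝ] C(K, ℝ), IsIsoEmbedding T :=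
  stmt2_general κ hκ X hX huniv
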